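/- arXiv:math/0307152 — 2 statements merged into one kernel-verified Lean document; each statement's English description precedes it below -/
import Mathlib

section
/- For every p ≥ 1 and every w ≥ 0, the scalar thresholding function S_{w,p} : ℝ → ℝ is non-expansive: for all x, x' ∈ ℝ, |S_{w,p}(x) − S_{w,p}(x')| ≤ |x − x'|. Consequently, for any real Hilbert space H with orthonormal basis (φ_γ)_{γ∈Γ} and any sequence w = (w_γ)_{γ∈Γ} of positive reals, the operator S_{w,p} on H is non-expansive: ‖S_{w,p}(v) − S_{w,p}(v')‖ ≤ ‖v − v'‖ for all v, v' ∈ H. -/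
open scoped ENNReal
open Filter

noncomputable def scalarF (w p : ℝ) (x : ℝ) : ℝ :=
  x + w * p / 2 * (Real.sign x * |x| ^ (p - 1))

noncomputable def scalarS (w p : ℝ) : ℝ → ℝ :=
  if p = 1 then
    fun x => if w / 2 ≤ x then x - w / 2 else if x ≤ -(w / 2) then x + w / 2 else 0
  else Function.invFun (scalarF w p)

noncomputable def shrinkOp {H : Type*} [NormedAddCommGroup H] [InnerProductSpace ℝ H]
    {Γ : Type*} (b : HilbertBasis Γ ℝ H) (w : Γ → ℝ) (p : ℝ) (h : H) : H :=
  ∑' γ, scalarS (w γ) p (b.repr h γ) • b γ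

noncomputable def Phi {H H' : Type*} [NormedAddCommGroup H] [InnerProductSpace ℝ H]
    [NormedAddCommGroup H'] [InnerProductSpace ℝ H']
    {Γ : Type*} (K : H →L[ℝ] H') (g : H') (b : HilbertBasis Γ ℝ H)
    (w : Γ → ℝ) (p : ℝ) (f : H) : ℝ≥0∞ :=
  ENNReal.ofReal (‖K f - g‖ ^ 2) + ∑' γ, ENNReal.ofReal (w γ * |b.repr f γ| ^ p)

/-! ### Auxiliary scalar lemmas -/

private lemma signPow_eq (p : ℝ) (hp : 1 < p) (x : ℝ) :
    Real.sign x * |x| ^ (p - 1) = if x ≤ 0 then -((-x) ^ (p - 1)) else x ^ (p - 1) := by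
  have hne : p - 1 ≠ 0 := sub_ne_zero.2 hp.ne'
  rcases lt_trichotomy x 0 with h | h | h
  · rw [Real.sign_of_neg h, abs_of_neg h, if_pos h.le]; ring
  · subst h
    simp [Real.sign_zero, Real.zero_rpow hne]
  · rw [Real.sign_of_pos h, abs_of_pos h, if_neg (not_le.2 h)]; ring

private lemma signPow_mono (p : ℝ) (hp : 1 < p) :
    Monotone fun x : ℝ => Real.sign x * |x| ^ (p - 1) := by
  have h0 : (0 : ℝ) ≤ p - 1 := by linarith
  intro x y hxy
  simp only [signPow_eq p hp]
  split_ifs with h1 h2 h2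
  · have hle : -y ≤ -x := by linarith
    have := Real.rpow_le_rpow (by linarith) hle h0
    linarith
  · have hx : (0 : ℝ) ≤ (-x) ^ (p - 1) := Real.rpow_nonneg (by linarith) _
    have hy : (0 : ℝ) ≤ y ^ (p - 1) :=
      Real.rpow_nonneg (le_of_lt (not_le.1 h2)) _
    linarith
  · exact absurd (hxy.trans h2) h1
  · exact Real.rpow_le_rpow (le_of_lt (not_le.1 h1)) hxy h0

private lemma signPow_cont (p : ℝ) (hp : 1 < p) :
    Continuous fun x : ℝ => Real.sign x * |x| ^ (p - 1) := by
  have h0 : (0 : ℝ) ≤ p - 1 := by linarith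
  have hne : p - 1 ≠ 0 := sub_ne_zero.2 hp.ne'
  have c1 : Continuous fun x : ℝ => x ^ (p - 1) := Real.continuous_rpow_const h0
  have c2 : Continuous fun x : ℝ => -((-x) ^ (p - 1)) := (c1.comp continuous_neg).neg
  have heq : (fun x : ℝ => Real.sign x * |x| ^ (p - 1)) =
      fun x : ℝ => if x ≤ 0 then -((-x) ^ (p - 1)) else x ^ (p - 1) :=
    funext (signPow_eq p hp)
  rw [heq]
  refine Continuous.if_le c2 c1 continuous_id continuous_const ?_
  intro x hx
  change x = 0 at hx
  subst hx
  simp [Real.zero_rpow hne]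

private lemma scalarF_strictMono (w p : ℝ) (hw : 0 ≤ w) (hp : 1 < p) :
    StrictMono (scalarF w p) := by
  have hc : 0 ≤ w * p / 2 := div_nonneg (mul_nonneg hw (by linarith)) (by norm_num)
  intro x y hxy
  have hm := mul_le_mul_of_nonneg_left (signPow_mono p hp hxy.le) hc
  unfold scalarF
  linarith

private lemma signPow_sign (p : ℝ) (hp : 1 < p) :
    (∀ x : ℝ, 0 ≤ x → 0 ≤ Real.sign x * |x| ^ (p - 1)) ∧
    (∀ x : ℝ, x ≤ 0 → Real.sign x * |x| ^ (p - 1) ≤ 0) := by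
  have h0 : Real.sign (0 : ℝ) * |(0 : ℝ)| ^ (p - 1) = 0 := by
    simp [Real.sign_zero]
  constructor
  · intro x hx
    calc (0:ℝ) = Real.sign 0 * |(0:ℝ)| ^ (p - 1) := h0.symm
      _ ≤ _ := signPow_mono p hp hx
  · intro x hx
    calc Real.sign x * |x| ^ (p - 1) ≤ Real.sign 0 * |(0:ℝ)| ^ (p - 1) := signPow_mono p hp hx
      _ = 0 := h0

private lemma scalarF_surj (w p : ℝ) (hw : 0 ≤ w) (hp : 1 < p) :
    Function.Surjective (scalarF w p) := by
  have hc : 0 ≤ w * p / 2 := div_nonneg (mul_nonneg hw (by linarith)) (by norm_num)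
  have hcont : Continuous (scalarF w p) := by
    unfold scalarF
    exact continuous_id.add (continuous_const.mul (signPow_cont p hp))
  refine hcont.surjective ?_ ?_
  · refine tendsto_atTop_mono' atTop ?_ tendsto_id
    filter_upwards [eventually_ge_atTop (0 : ℝ)] with x hx
    have := mul_nonneg hc ((signPow_sign p hp).1 x hx)
    unfold scalarF
    simp only [id]
    linarith
  · refine tendsto_atBot_mono' atBot ?_ tendsto_id
    filter_upwards [eventually_le_atBot (0 : ℝ)] with x hx
    have h1 := (signPow_sign p hp).2 x hx
    have := mul_nonpos_of_nonneg_of_nonpos hc h1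
    unfold scalarF
    simp only [id]
    linarith

private lemma scalarS_lip_gt (w p : ℝ) (hw : 0 ≤ w) (hp : 1 < p) (x x' : ℝ) :
    |scalarS w p x - scalarS w p x'| ≤ |x - x'| := by
  have hsurj := scalarF_surj w p hw hp
  have hc : 0 ≤ w * p / 2 := div_nonneg (mul_nonneg hw (by linarith)) (by norm_num)
  have hS : scalarS w p = Function.invFun (scalarF w p) := by
    unfold scalarS; rw [if_neg hp.ne']
  have hFS : ∀ y, scalarF w p (scalarS w p y) = y := fun y => by
    rw [hS]; exact Function.invFun_eq (hsurj y)
  have key : ∀ a a' : ℝ, a' ≤ a → a - a' ≤ scalarF w p a - scalarF w p a' := by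
    intro a a' h
    have hm := mul_le_mul_of_nonneg_left (signPow_mono p hp h) hc
    unfold scalarF
    linarith
  have key2 : ∀ a a' : ℝ, |a - a'| ≤ |scalarF w p a - scalarF w p a'| := by
    intro a a'
    rcases le_total a' a with h | h
    · rw [abs_of_nonneg (by linarith), abs_of_nonneg (by linarith [key a a' h])]
      exact key a a' h
    · rw [abs_sub_comm a, abs_sub_comm (scalarF w p a)]
      rw [abs_of_nonneg (by linarith), abs_of_nonneg (by linarith [key a' a h])]
      exact key a' a h
  calc |scalarS w p x - scalarS w p x'|
      ≤ |scalarF w p (scalarS w p x) - scalarF w p (scalarS w p x')| := key2 _ _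
    _ = |x - x'| := by rw [hFS, hFS]

private lemma scalarS_lip (p : ℝ) (hp : 1 ≤ p) (w : ℝ) (hw : 0 ≤ w) (x x' : ℝ) :
    |scalarS w p x - scalarS w p x'| ≤ |x - x'| := by
  rcases eq_or_lt_of_le hp with h | h
  · subst h
    unfold scalarS
    rw [if_pos rfl]
    rw [abs_le]
    rcases abs_cases (x - x') with ⟨h1, h2⟩ | ⟨h1, h2⟩ <;>
      split_ifs <;> constructor <;> linarith
  · exact scalarS_lip_gt w p hw h x x'

private lemma scalarS_zero (p : ℝ) (hp : 1 ≤ p) (w : ℝ) (hw : 0 ≤ w) :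
    scalarS w p 0 = 0 := by
  rcases eq_or_lt_of_le hp with h | h
  · subst h
    unfold scalarS
    rw [if_pos rfl]
    split_ifs <;> linarith
  · have hsm := scalarF_strictMono w p hw h
    have hF0 : scalarF w p 0 = 0 := by
      unfold scalarF
      simp [Real.sign_zero]
    unfold scalarS
    rw [if_neg h.ne']
    conv_lhs => rw [← hF0]
    exact Function.leftInverse_invFun hsm.injective 0

private lemma scalarS_abs_le (p : ℝ) (hp : 1 ≤ p) (w : ℝ) (hw : 0 ≤ w) (x : ℝ) :
    |scalarS w p x| ≤ |x| := by
  have := scalarS_lip p hp w hw x 0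
  rwa [scalarS_zero p hp w hw, sub_zero, sub_zero] at this

private lemma lp_norm_mono {Γ : Type*} (F G : lp (fun _ : Γ => ℝ) 2)
    (h : ∀ γ, ‖F γ‖ ≤ ‖G γ‖) : ‖F‖ ≤ ‖G‖ := by
  have h2 : (0 : ℝ) < (2 : ℝ≥0∞).toReal := by norm_num
  rw [lp.norm_eq_tsum_rpow h2, lp.norm_eq_tsum_rpow h2]
  refine Real.rpow_le_rpow (tsum_nonneg fun γ => Real.rpow_nonneg (norm_nonneg _) _)
    ?_ (by positivity)
  exact Summable.tsum_le_tsum (fun γ => Real.rpow_le_rpow (norm_nonneg _) (h γ) h2.le)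
    ((lp.memℓp F).summable h2) ((lp.memℓp G).summable h2)

/-- The scalar thresholding functions are non-expansive, and hence so is the shrinkage
operator on a Hilbert space. -/
theorem shrinkage_nonexpansive
    {H : Type*} [NormedAddCommGroup H] [InnerProductSpace ℝ H]
    {Γ : Type*} (b : HilbertBasis Γ ℝ H)
    (p : ℝ) (hp : 1 ≤ p) (w : Γ → ℝ) (hw : ∀ γ, 0 < w γ) :
    (∀ w' : ℝ, 0 ≤ w' → ∀ x x' : ℝ, |scalarS w' p x - scalarS w' p x'| ≤ |x - x'|) ∧
    (∀ v v' : H, ‖shrinkOp b w p v - shrinkOp b w p v'‖ ≤ ‖v - v'‖) := by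
  refine ⟨fun w' hw' x x' => scalarS_lip p hp w' hw' x x', ?_⟩
  intro v v'
  have h2 : (0 : ℝ) < (2 : ℝ≥0∞).toReal := by norm_num
  have hmem : ∀ u : H, Memℓp (fun γ => scalarS (w γ) p (b.repr u γ)) 2 := by
    intro u
    apply memℓp_gen
    refine Summable.of_nonneg_of_le (fun γ => Real.rpow_nonneg (norm_nonneg _) _)
      (fun γ => ?_) ((lp.memℓp (b.repr u)).summable h2)
    refine Real.rpow_le_rpow (norm_nonneg _) ?_ h2.le
    simpa [Real.norm_eq_abs] using scalarS_abs_le p hp (w γ) (hw γ).le (b.repr u γ)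
  set G : H → lp (fun _ : Γ => ℝ) 2 :=
    fun u => ⟨fun γ => scalarS (w γ) p (b.repr u γ), hmem u⟩ with hG
  have hshrink : ∀ u : H, shrinkOp b w p u = b.repr.symm (G u) := by
    intro u
    exact (b.hasSum_repr_symm (G u)).tsum_eq
  rw [hshrink, hshrink, ← map_sub, LinearIsometryEquiv.norm_map]
  have hv : ‖v - v'‖ = ‖b.repr v - b.repr v'‖ := by
    rw [← map_sub, b.repr.norm_map]
  rw [hv]
  refine lp_norm_mono _ _ fun γ => ?_
  rw [lp.coeFn_sub, lp.coeFn_sub, Pi.sub_apply, Pi.sub_apply]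
  simpa [Real.norm_eq_abs, hG] using
    scalarS_lip p hp (w γ) (hw γ).le (b.repr v γ) (b.repr v' γ)
end

section
/- Let H and H' be real Hilbert spaces, K : H → H' a bounded linear operator with operator norm strictly less than 1, g ∈ H', p ≥ 1, (φ_γ)_{γ∈Γ} an orthonormal basis of H, and w = (w_γ)_{γ∈Γ} a sequence of strictly positive weights. Define T f = S_{w,p}(f + K*(g − Kf)) and Φ_{w,p}(f) = ‖Kf − g‖² + Σ_{γ∈Γ} w_γ |⟨f,φ_γ⟩|^p. If f* ∈ H is a fixed point of T, i.e. f* = T f*, then for every h ∈ H one has Φ_{w,p}(f* + h) ≥ Φ_{w,p}(f*) + ‖Kh‖²; in particular, f* is a minimizer of Φ_{w,p}. -/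
open scoped ENNReal InnerProductSpace
open Filter

lemma sign_mul_abs_rpow_nonneg {p : ℝ} {x : ℝ} (hx : 0 ≤ x) :
    0 ≤ Real.sign x * |x| ^ (p - 1) := by
  rcases eq_or_lt_of_le hx with rfl | hx'
  · simp
  · rw [Real.sign_of_pos hx']
    positivity

lemma sign_mul_abs_rpow_nonpos {p : ℝ} {x : ℝ} (hx : x ≤ 0) :
    Real.sign x * |x| ^ (p - 1) ≤ 0 := by
  rcases eq_or_lt_of_le hx with rfl | hx'
  · simp
  · rw [Real.sign_of_neg hx']
    have : (0:ℝ) ≤ |x| ^ (p-1) := Real.rpow_nonneg (abs_nonneg x) _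
    linarith

lemma continuous_sign_mul_abs_rpow {p : ℝ} (hp : 1 < p) :
    Continuous fun x : ℝ => Real.sign x * |x| ^ (p - 1) := by
  have habs : Continuous fun x : ℝ => |x| ^ (p - 1) :=
    continuous_abs.rpow_const (fun x => Or.inr (by linarith))
  rw [continuous_iff_continuousAt]
  intro x
  rcases lt_trichotomy x 0 with hx | rfl | hx
  · have hev : (fun y : ℝ => (-1 : ℝ) * |y| ^ (p - 1)) =ᶠ[nhds x]
        fun y => Real.sign y * |y| ^ (p - 1) := by
      filter_upwards [Iio_mem_nhds hx] with y hy
      rw [Real.sign_of_neg hy]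
    exact ContinuousAt.congr ((continuous_const.mul habs).continuousAt) hev
  · have hb : Filter.Tendsto (fun y : ℝ => |y| ^ (p - 1)) (nhds 0) (nhds 0) := by
      have := habs.continuousAt (x := 0)
      unfold ContinuousAt at this
      simpa [Real.zero_rpow (by linarith : p - 1 ≠ 0)] using this
    have ht2 : Filter.Tendsto (fun y : ℝ => Real.sign y * |y| ^ (p - 1)) (nhds 0) (nhds 0) := by
      refine squeeze_zero_norm (fun y => ?_) hb
      rw [norm_mul, Real.norm_eq_abs, Real.norm_eq_abs,
        abs_of_nonneg (Real.rpow_nonneg (abs_nonneg y) _)]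
      have : |Real.sign y| ≤ 1 := by
        rcases Real.sign_apply_eq y with h | h | h <;> simp [h]
      nlinarith [Real.rpow_nonneg (abs_nonneg y) (p-1)]
    have h00 : (fun x : ℝ => Real.sign x * |x| ^ (p - 1)) 0 = 0 := by simp
    unfold ContinuousAt
    rw [h00]
    exact ht2
  · have hev : (fun y : ℝ => (1 : ℝ) * |y| ^ (p - 1)) =ᶠ[nhds x]
        fun y => Real.sign y * |y| ^ (p - 1) := by
      filter_upwards [Ioi_mem_nhds hx] with y hy
      rw [Real.sign_of_pos hy]
    exact ContinuousAt.congr ((continuous_const.mul habs).continuousAt) hev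

lemma scalarF_surjective {w p : ℝ} (hw : 0 ≤ w) (hp : 1 < p) :
    Function.Surjective (scalarF w p) := by
  have hwp : 0 ≤ w * p / 2 := by positivity
  have hc : Continuous (scalarF w p) :=
    continuous_id.add (continuous_const.mul (continuous_sign_mul_abs_rpow hp))
  apply hc.surjective
  · apply tendsto_atTop_mono' _ _ tendsto_id
    filter_upwards [eventually_ge_atTop (0:ℝ)] with x hx
    have := sign_mul_abs_rpow_nonneg (p := p) hx
    simp only [scalarF, id]
    nlinarith
  · apply tendsto_atBot_mono' _ _ tendsto_id
    filter_upwards [eventually_le_atBot (0:ℝ)] with x hx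
    have := sign_mul_abs_rpow_nonpos (p := p) hx
    simp only [scalarF, id]
    nlinarith

lemma scalarF_scalarS {w p : ℝ} (hw : 0 ≤ w) (hp : 1 < p) (t : ℝ) :
    scalarF w p (scalarS w p t) = t := by
  rw [scalarS, if_neg hp.ne']
  exact Function.invFun_eq (scalarF_surjective hw hp t)

lemma abs_rpow_support {p : ℝ} (hp : 1 < p) (x y : ℝ) :
    |x| ^ p + p * Real.sign x * |x| ^ (p - 1) * (y - x) ≤ |y| ^ p := by
  rcases eq_or_ne x 0 with rfl | hx
  · simp [Real.zero_rpow (by positivity : p ≠ 0)]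
    positivity
  · have ha : (0:ℝ) < |x| := abs_pos.mpr hx
    set a : ℝ := |x| with hadef
    set A : ℝ := a ^ p with hA
    set B : ℝ := a ^ (p - 1) with hB
    have hBA : A = B * a := by
      rw [hA, hB]
      have h := Real.rpow_add ha (p-1) 1
      rw [Real.rpow_one] at h
      rw [← h]
      norm_num
    have hApos : 0 < A := Real.rpow_pos_of_pos ha p
    have hBpos : 0 < B := Real.rpow_pos_of_pos ha (p-1)
    -- Bernoulli
    have hs : (-1:ℝ) ≤ |y| / a - 1 := by
      have : 0 ≤ |y| / a := div_nonneg (abs_nonneg y) ha.le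
      linarith
    have bern := one_add_mul_self_le_rpow_one_add hs hp.le
    have hR : (1 + (|y| / a - 1)) ^ p = |y| ^ p / A := by
      rw [show (1 + (|y| / a - 1)) = |y| / a by ring, Real.div_rpow (abs_nonneg y) ha.le, hA]
    rw [hR] at bern
    have key : A + p * B * (|y| - a) ≤ |y| ^ p := by
      have h2 := mul_le_mul_of_nonneg_left bern hApos.le
      rw [mul_div_cancel₀ _ hApos.ne'] at h2
      have expand : A * (1 + p * (|y| / a - 1)) = A + p * B * (|y| - a) := by
        rw [hBA]; field_simp
      linarith [expand ▸ h2]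
    have h1 : Real.sign x * (y - x) ≤ |y| - a := by
      rcases hx.lt_or_gt with h | h
      · rw [Real.sign_of_neg h, hadef, abs_of_neg h]
        have := neg_abs_le y
        linarith
      · rw [Real.sign_of_pos h, hadef, abs_of_pos h]
        have := le_abs_self y
        linarith
    have h3 : p * Real.sign x * B * (y - x) ≤ p * B * (|y| - a) := by
      have hpB : 0 ≤ p * B := by positivity
      calc p * Real.sign x * B * (y - x) = (p * B) * (Real.sign x * (y - x)) := by ring
        _ ≤ (p * B) * (|y| - a) := by exact mul_le_mul_of_nonneg_left h1 hpB
        _ = p * B * (|y| - a) := by ring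
    calc |x| ^ p + p * Real.sign x * |x| ^ (p-1) * (y - x)
        = A + p * Real.sign x * B * (y - x) := by rw [hA, hB]
      _ ≤ A + p * B * (|y| - a) := by linarith
      _ ≤ |y| ^ p := key

lemma scalarS_support {w p : ℝ} (hw : 0 < w) (hp : 1 ≤ p) (t y : ℝ) :
    w * |scalarS w p t| ^ p + 2 * (y - scalarS w p t) * (t - scalarS w p t) ≤ w * |y| ^ p := by
  rcases eq_or_lt_of_le hp with heq | hp1
  · -- p = 1
    subst heq
    have hS : scalarS w 1 = fun t : ℝ =>
        if w / 2 ≤ t then t - w / 2 else if t ≤ -(w / 2) then t + w / 2 else 0 := by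
      simp [scalarS]
    simp only [hS, Real.rpow_one]
    split_ifs with h1 h2
    · rw [abs_of_nonneg (by linarith : (0:ℝ) ≤ t - w/2)]
      nlinarith [le_abs_self y, abs_nonneg y]
    · rw [abs_of_nonpos (by linarith : t + w/2 ≤ 0)]
      nlinarith [neg_abs_le y, abs_nonneg y]
    · push_neg at h1 h2
      simp only [abs_zero, sub_zero]
      nlinarith [mul_nonneg (sub_nonneg.2 (le_abs_self y)) (by linarith : (0:ℝ) ≤ w/2 + t),
        mul_nonneg (by linarith [neg_abs_le y] : (0:ℝ) ≤ |y| + y) (by linarith : (0:ℝ) ≤ w/2 - t)]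
  · -- p > 1
    have hFS := scalarF_scalarS hw.le hp1 t
    set x := scalarS w p t with hxdef
    have ht : t - x = w * p / 2 * (Real.sign x * |x| ^ (p-1)) := by
      rw [← hFS]; simp only [scalarF]; ring
    rw [ht]
    have key := abs_rpow_support hp1 x y
    have hrw : w * |x| ^ p + 2 * (y - x) * (w * p / 2 * (Real.sign x * |x| ^ (p-1)))
        = w * (|x| ^ p + p * Real.sign x * |x| ^ (p-1) * (y - x)) := by ring
    rw [hrw]
    exact mul_le_mul_of_nonneg_left key hw.le

lemma abs_scalarS_le {w p : ℝ} (hw : 0 < w) (hp : 1 ≤ p) (t : ℝ) :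
    |scalarS w p t| ≤ |t| := by
  have h := scalarS_support hw hp t 0
  set x := scalarS w p t with hxdef
  rw [abs_zero, Real.zero_rpow (by linarith : p ≠ 0), mul_zero] at h
  have hxp : 0 ≤ w * |x| ^ p := by positivity
  have hxt : x * x ≤ x * t := by nlinarith
  rcases eq_or_ne x 0 with h0 | h0
  · rw [h0, abs_zero]; exact abs_nonneg t
  · have hx : 0 < |x| := abs_pos.2 h0
    have h2 : |x| * |x| ≤ |x| * |t| := by
      calc |x| * |x| = x * x := abs_mul_abs_self x
        _ ≤ x * t := hxt
        _ ≤ |x * t| := le_abs_self _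
        _ = |x| * |t| := abs_mul x t
    exact le_of_mul_le_mul_left h2 hx

lemma lp_summable_sq {Γ : Type*} (f : lp (fun _ : Γ => ℝ) 2) :
    Summable fun γ => f γ * f γ := by
  have h := lp.summable_inner (𝕜 := ℝ) f f
  simpa [RCLike.inner_apply, pow_two] using h

lemma lp_hasSum_mul {Γ : Type*} (f g : lp (fun _ : Γ => ℝ) 2) :
    HasSum (fun γ => f γ * g γ) ⟪f, g⟫_ℝ := by
  have h := lp.hasSum_inner (𝕜 := ℝ) f g
  simpa [RCLike.inner_apply, mul_comm] using h

/-- A fixed point of the thresholded Landweber map is a minimizer of the penalized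
functional, with the quantitative bound `Φ(f* + h) ≥ Φ(f*) + ‖Kh‖²`. -/
theorem fixed_point_is_minimizer
    {H H' : Type*} [NormedAddCommGroup H] [InnerProductSpace ℝ H] [CompleteSpace H]
    [NormedAddCommGroup H'] [InnerProductSpace ℝ H'] [CompleteSpace H']
    {Γ : Type*} (b : HilbertBasis Γ ℝ H)
    (K : H →L[ℝ] H') (hK : ‖K‖ < 1) (g : H')
    (p : ℝ) (hp : 1 ≤ p) (w : Γ → ℝ) (hw : ∀ γ, 0 < w γ)
    (fstar : H)
    (hfix : shrinkOp b w p (fstar + (ContinuousLinearMap.adjoint K) (g - K fstar)) = fstar) :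
    (∀ h : H, Phi K g b w p fstar + ENNReal.ofReal (‖K h‖ ^ 2)
        ≤ Phi K g b w p (fstar + h)) ∧
    (∀ h : H, Phi K g b w p fstar ≤ Phi K g b w p h) := by
  classical
  have hp0 : p ≠ 0 := by linarith
  set D : H' := g - K fstar with hD
  set a : H := fstar + (ContinuousLinearMap.adjoint K) D with ha
  -- ℓ² membership of the shrunk coefficients
  have hmem : Memℓp (fun γ => scalarS (w γ) p (b.repr a γ)) 2 := by
    apply memℓp_gen
    have hs := Memℓp.summable (p := 2) (by norm_num) (b.repr a).property
    refine Summable.of_nonneg_of_le (fun γ => by positivity) (fun γ => ?_) hs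
    have hle := abs_scalarS_le (hw γ) hp (b.repr a γ)
    simp only [Real.norm_eq_abs]
    exact Real.rpow_le_rpow (abs_nonneg _) hle ENNReal.toReal_nonneg
  set c : lp (fun _ : Γ => ℝ) 2 := ⟨fun γ => scalarS (w γ) p (b.repr a γ), hmem⟩ with hc
  have hsum : HasSum (fun γ => scalarS (w γ) p (b.repr a γ) • b γ) (b.repr.symm c) :=
    b.hasSum_repr_symm c
  have hfs : b.repr.symm c = fstar := by
    rw [← hfix, shrinkOp]
    exact hsum.tsum_eq.symm
  have hcoef : ∀ γ, b.repr fstar γ = scalarS (w γ) p (b.repr a γ) := by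
    intro γ
    conv_lhs => rw [← hfs]
    rw [LinearIsometryEquiv.apply_symm_apply]
  have hac : ∀ γ, b.repr a γ = b.repr fstar γ
      + b.repr ((ContinuousLinearMap.adjoint K) D) γ := by
    intro γ
    rw [ha, map_add, lp.coeFn_add, Pi.add_apply]
  have hfixc : ∀ γ, scalarS (w γ) p
      (b.repr fstar γ + b.repr ((ContinuousLinearMap.adjoint K) D) γ) = b.repr fstar γ := by
    intro γ
    rw [← hac γ, ← hcoef γ]
  -- key pointwise inequality
  have key : ∀ γ (y : ℝ),
      w γ * |b.repr fstar γ| ^ p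
        + 2 * (y - b.repr fstar γ) * (b.repr ((ContinuousLinearMap.adjoint K) D) γ)
      ≤ w γ * |y| ^ p := by
    intro γ y
    have h1 := scalarS_support (hw γ) hp
      (b.repr fstar γ + b.repr ((ContinuousLinearMap.adjoint K) D) γ) y
    rw [hfixc γ] at h1
    have e : b.repr fstar γ + b.repr ((ContinuousLinearMap.adjoint K) D) γ - b.repr fstar γ
        = b.repr ((ContinuousLinearMap.adjoint K) D) γ := by ring
    rw [e] at h1
    exact h1
  -- summability of the penalty at fstar
  have husq : Summable fun γ => b.repr fstar γ * b.repr fstar γ := lp_summable_sq (b.repr fstar)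
  have hcsq : Summable fun γ => b.repr ((ContinuousLinearMap.adjoint K) D) γ
      * b.repr ((ContinuousLinearMap.adjoint K) D) γ :=
    lp_summable_sq (b.repr ((ContinuousLinearMap.adjoint K) D))
  have hBnn : ∀ γ, 0 ≤ w γ * |b.repr fstar γ| ^ p := fun γ => by
    have := (hw γ).le
    positivity
  have hBsum : Summable fun γ => w γ * |b.repr fstar γ| ^ p := by
    refine Summable.of_nonneg_of_le hBnn (fun γ => ?_) (husq.add hcsq)
    have h0 := key γ 0
    rw [abs_zero, Real.zero_rpow hp0, mul_zero] at h0
    nlinarith [sq_nonneg (b.repr fstar γ - b.repr ((ContinuousLinearMap.adjoint K) D) γ)]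
  have main : ∀ h : H, Phi K g b w p fstar + ENNReal.ofReal (‖K h‖ ^ 2)
      ≤ Phi K g b w p (fstar + h) := by
    intro h
    have hrep : ∀ γ, b.repr (fstar + h) γ = b.repr fstar γ + b.repr h γ := by
      intro γ
      rw [map_add, lp.coeFn_add, Pi.add_apply]
    by_cases hT : (∑' γ, ENNReal.ofReal (w γ * |b.repr (fstar + h) γ| ^ p)) = ⊤
    · have htop : Phi K g b w p (fstar + h) = ⊤ := by
        unfold Phi
        rw [hT, add_top]
      rw [htop]
      exact le_top
    · -- finite case
      have hvnn : ∀ γ, 0 ≤ w γ * |b.repr (fstar + h) γ| ^ p := fun γ => by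
        have := (hw γ).le
        positivity
      have hvs : Summable fun γ => w γ * |b.repr (fstar + h) γ| ^ p := by
        have h3 : (∑' γ, ((w γ * |b.repr (fstar + h) γ| ^ p).toNNReal : ℝ≥0∞)) ≠ ⊤ := by
          convert hT using 2 with γ
          rfl
        have h4 := ENNReal.tsum_coe_ne_top_iff_summable.mp h3
        have h5 := NNReal.summable_coe.mpr h4
        refine (summable_congr fun γ => ?_).mp h5
        exact Real.coe_toNNReal _ (hvnn γ)
      have hinner : HasSum (fun γ => b.repr h γ * b.repr ((ContinuousLinearMap.adjoint K) D) γ)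
          ⟪K h, D⟫_ℝ := by
        have h1 := lp_hasSum_mul (b.repr h) (b.repr ((ContinuousLinearMap.adjoint K) D))
        have h2 : ⟪b.repr h, b.repr ((ContinuousLinearMap.adjoint K) D)⟫_ℝ = ⟪K h, D⟫_ℝ := by
          rw [b.repr.inner_map_map, ContinuousLinearMap.adjoint_inner_right]
        rwa [h2] at h1
      have hterm : ∀ γ, w γ * |b.repr fstar γ| ^ p
          + 2 * (b.repr h γ * b.repr ((ContinuousLinearMap.adjoint K) D) γ)
          ≤ w γ * |b.repr fstar γ + b.repr h γ| ^ p := by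
        intro γ
        have hk := key γ (b.repr fstar γ + b.repr h γ)
        have e : w γ * |b.repr fstar γ| ^ p
            + 2 * (b.repr h γ * b.repr ((ContinuousLinearMap.adjoint K) D) γ)
            = w γ * |b.repr fstar γ| ^ p
            + 2 * ((b.repr fstar γ + b.repr h γ) - b.repr fstar γ)
              * (b.repr ((ContinuousLinearMap.adjoint K) D) γ) := by ring
        rw [e]
        exact hk
      have hvs' : Summable fun γ => w γ * |b.repr fstar γ + b.repr h γ| ^ p := by
        refine (summable_congr fun γ => ?_).mp hvs
        rw [hrep γ]
      have hLsum : HasSum (fun γ => w γ * |b.repr fstar γ| ^ p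
          + 2 * (b.repr h γ * b.repr ((ContinuousLinearMap.adjoint K) D) γ))
          ((∑' γ, w γ * |b.repr fstar γ| ^ p) + 2 * ⟪K h, D⟫_ℝ) :=
        hBsum.hasSum.add (hinner.mul_left 2)
      have hsum_ineq : (∑' γ, w γ * |b.repr fstar γ| ^ p) + 2 * ⟪K h, D⟫_ℝ
          ≤ ∑' γ, w γ * |b.repr fstar γ + b.repr h γ| ^ p := by
        rw [← hLsum.tsum_eq]
        exact Summable.tsum_le_tsum hterm hLsum.summable hvs'
      have hexp : ‖K (fstar + h) - g‖ ^ 2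
          = ‖K fstar - g‖ ^ 2 - 2 * ⟪K h, D⟫_ℝ + ‖K h‖ ^ 2 := by
        have e1 : K (fstar + h) - g = (K fstar - g) + K h := by
          rw [map_add]; abel
        rw [e1, norm_add_sq_real]
        have e2 : ⟪K fstar - g, K h⟫_ℝ = - ⟪K h, D⟫_ℝ := by
          have e3 : K fstar - g = -D := by rw [hD]; abel
          rw [e3, inner_neg_left, real_inner_comm]
        rw [e2]; ring
      -- assemble in ℝ≥0∞
      simp only [Phi]
      have hBtsum : (∑' γ, ENNReal.ofReal (w γ * |b.repr fstar γ| ^ p))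
          = ENNReal.ofReal (∑' γ, w γ * |b.repr fstar γ| ^ p) :=
        (ENNReal.ofReal_tsum_of_nonneg hBnn hBsum).symm
      have hVtsum : (∑' γ, ENNReal.ofReal (w γ * |b.repr (fstar + h) γ| ^ p))
          = ENNReal.ofReal (∑' γ, w γ * |b.repr fstar γ + b.repr h γ| ^ p) := by
        have e : ∀ γ, ENNReal.ofReal (w γ * |b.repr (fstar + h) γ| ^ p)
            = ENNReal.ofReal (w γ * |b.repr fstar γ + b.repr h γ| ^ p) := fun γ => by
          rw [hrep γ]
        rw [tsum_congr e, ← ENNReal.ofReal_tsum_of_nonneg (fun γ => by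
          have := (hw γ).le; positivity) hvs']
      rw [hBtsum, hVtsum]
      have hA : (0:ℝ) ≤ ‖K fstar - g‖ ^ 2 := by positivity
      have hB : (0:ℝ) ≤ ∑' γ, w γ * |b.repr fstar γ| ^ p := tsum_nonneg hBnn
      have hA' : (0:ℝ) ≤ ‖K (fstar + h) - g‖ ^ 2 := by positivity
      rw [← ENNReal.ofReal_add hA hB, ← ENNReal.ofReal_add (by linarith) (by positivity),
        ← ENNReal.ofReal_add hA' (tsum_nonneg fun γ => by have := (hw γ).le; positivity)]
      apply ENNReal.ofReal_le_ofReal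
      linarith [hsum_ineq, hexp]
  refine ⟨main, fun h => ?_⟩
  have hmn := main (h - fstar)
  have e : fstar + (h - fstar) = h := by abel
  rw [e] at hmn
  exact le_trans le_self_add hmn
end
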